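/- In any finite model of φ := (∃x P₀(x)) ∧ ⋀_{0≤i<n} ∀x (Pᵢ(x) → ∃y (R(x,y) ∧ P_{(i+1) mod n}(y))) ∧ (pairwise disjointness of P₀,...,P_{n-1}) in which R is additionally transitive, there exist distinct a₀,...,a_{n-1} with Pᵢ(aᵢ) for all i and R(aᵢ,aⱼ) for all i ≠ j. -/
import Mathlib

private theorem pcast17 {n : ℕ} {A : Type} {P : Fin n → A → Prop} {a b : ℕ}
    (e : a = b) (ha : a < n) (hb : b < n) {x : A} (h : P ⟨a, ha⟩ x) : P ⟨b, hb⟩ x := by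
  subst e; exact h

private noncomputable def chain17 (n : ℕ) (hn : 0 < n) (A : Type)
    (P : Fin n → A → Prop) (R : A → A → Prop)
    (h0 : ∃ x, P ⟨0, hn⟩ x)
    (hstep : ∀ (i : Fin n) (x : A), P i x → ∃ y, R x y ∧ P ⟨(i.val + 1) % n, Nat.mod_lt _ hn⟩ y) :
    (k : ℕ) → {x : A // P ⟨k % n, Nat.mod_lt _ hn⟩ x}
  | 0 => ⟨h0.choose, pcast17 (Nat.zero_mod n).symm hn (Nat.mod_lt _ hn) h0.choose_spec⟩
  | k + 1 =>
    ⟨(hstep ⟨k % n, Nat.mod_lt _ hn⟩ (chain17 n hn A P R h0 hstep k).1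
        (chain17 n hn A P R h0 hstep k).2).choose,
      pcast17 (by simp [Nat.add_mod]) (Nat.mod_lt _ hn) (Nat.mod_lt _ hn)
        (hstep ⟨k % n, Nat.mod_lt _ hn⟩ (chain17 n hn A P R h0 hstep k).1
          (chain17 n hn A P R h0 hstep k).2).choose_spec.2⟩

private theorem chain17_succ (n : ℕ) (hn : 0 < n) (A : Type)
    (P : Fin n → A → Prop) (R : A → A → Prop)
    (h0 : ∃ x, P ⟨0, hn⟩ x)
    (hstep : ∀ (i : Fin n) (x : A), P i x → ∃ y, R x y ∧ P ⟨(i.val + 1) % n, Nat.mod_lt _ hn⟩ y)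
    (k : ℕ) :
    R (chain17 n hn A P R h0 hstep k).1 (chain17 n hn A P R h0 hstep (k+1)).1 := by
  rw [chain17]
  exact (hstep ⟨k % n, Nat.mod_lt _ hn⟩ (chain17 n hn A P R h0 hstep k).1
    (chain17 n hn A P R h0 hstep k).2).choose_spec.1
/-- In any finite model of the cyclic chain formula (indices mod n, pairwise disjoint
predicates) with R transitive, there are n pairwise distinct elements a₀,…,a_{n-1}
with Pᵢ(aᵢ) and R(aᵢ,aⱼ) for all i ≠ j: an R-clique of size n. -/
theorem stmt17 (n : ℕ) (hn : 0 < n) (A : Type) (hA : Finite A)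
    (P : Fin n → A → Prop) (R : A → A → Prop)
    (htrans : ∀ x y z, R x y → R y z → R x z)
    (h0 : ∃ x, P ⟨0, hn⟩ x)
    (hstep : ∀ (i : Fin n) (x : A), P i x → ∃ y, R x y ∧ P ⟨(i.val + 1) % n, Nat.mod_lt _ hn⟩ y)
    (hdisj : ∀ i j : Fin n, i ≠ j → ∀ x, ¬ (P i x ∧ P j x)) :
    ∃ a : Fin n → A, Function.Injective a ∧
      (∀ i, P i (a i)) ∧
      (∀ i j, i ≠ j → R (a i) (a j)) := by
  classical
  set f : ℕ → A := fun k => (chain17 n hn A P R h0 hstep k).1 with hf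
  have hP : ∀ k : ℕ, P ⟨k % n, Nat.mod_lt _ hn⟩ (f k) :=
    fun k => (chain17 n hn A P R h0 hstep k).2
  have hsucc : ∀ k, R (f k) (f (k+1)) := chain17_succ n hn A P R h0 hstep
  have hR : ∀ p q, p < q → R (f p) (f q) := by
    intro p q hpq
    induction q with
    | zero => omega
    | succ q ih =>
      rcases Nat.lt_succ_iff_lt_or_eq.1 hpq with h | h
      · exact htrans _ _ _ (ih h) (hsucc q)
      · subst h; exact hsucc p
  -- elements determine residues
  have hres : ∀ p q : ℕ, f p = f q → p % n = q % n := by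
    intro p q hpq
    by_contra hne
    exact hdisj ⟨p % n, Nat.mod_lt _ hn⟩ ⟨q % n, Nat.mod_lt _ hn⟩
      (by simpa [Fin.ext_iff] using hne) (f p) ⟨hP p, hpq ▸ hP q⟩
  -- pigeonhole
  obtain ⟨k, m, hkm, hfe⟩ := Finite.exists_ne_map_eq_of_infinite f
  wlog hlt : k < m generalizing k m
  · exact this m k (Ne.symm hkm) hfe.symm (by omega)
  have hmod : k % n = m % n := hres k m hfe
  have hdvd : n ∣ m - k := by
    have : k ≡ m [MOD n] := hmod
    exact (Nat.modEq_iff_dvd' hlt.le).1 this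
  have hmk : k + n ≤ m := by
    have := Nat.le_of_dvd (by omega) hdvd
    omega
  -- define the clique
  set d : Fin n → ℕ := fun i => (i.val + n - k % n) % n with hd
  have hkn : k % n < n := Nat.mod_lt _ hn
  have hdlt : ∀ i : Fin n, d i < n := fun i => Nat.mod_lt _ hn
  have hdres : ∀ i : Fin n, (k + d i) % n = i.val := by
    intro i
    have e1 : (k + d i) % n = (k % n + (i.val + n - k % n)) % n := by
      simp [hd, Nat.add_mod]
    have e2 : k % n + (i.val + n - k % n) = i.val + n := by omega
    rw [e1, e2, Nat.add_mod_right, Nat.mod_eq_of_lt i.isLt]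
  have hPa : ∀ i : Fin n, P i (f (k + d i)) := by
    intro i
    have := pcast17 (hdres i) (Nat.mod_lt _ hn) i.isLt (hP (k + d i))
    exact this
  refine ⟨fun i => f (k + d i), ?_, hPa, ?_⟩
  · intro i j hij
    have := hres _ _ hij
    rw [hdres i, hdres j] at this
    exact Fin.ext this
  · intro i j hne
    have hdne : d i ≠ d j := by
      intro h
      exact hne (Fin.ext (by rw [← hdres i, ← hdres j, h]))
    rcases lt_or_gt_of_ne hdne with h | h
    · exact hR _ _ (by omega)
    · have h1 : R (f (k + d i)) (f m) := hR _ _ (by have := hdlt i; omega)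
      rw [← hfe] at h1
      rcases Nat.eq_zero_or_pos (d j) with h0' | hpos
      · simpa [h0'] using h1
      · exact htrans _ _ _ h1 (hR k (k + d j) (by omega))
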